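/- Let X be a compact metric space, m ≥ 2, and h₁, …, h_m : X → X continuous. Let L ⊆ X be nonempty compact with L = ⋃_{j=1}^m h_j⁻¹(L), and suppose h₁⁻¹(L) ∩ h_j⁻¹(L) = ∅ for all j ≠ 1. Then for every k ≥ 1 and every word w = (w₁,…,w_k) ∈ {1,…,m}^k with w ≠ (1,…,1), one has (h₁^k)⁻¹(L) ∩ (h_{w_k} ∘ ⋯ ∘ h_{w₁})⁻¹(L) = ∅, where h₁^k denotes the k-fold composition of h₁. -/
import Mathlib


/-- For a word `w = (w₁, …, w_k)` (as a list), the composition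
`h_{w_k} ∘ ⋯ ∘ h_{w₁}`. -/
def wordComp {X : Type*} {m : ℕ} (h : Fin m → X → X) (w : List (Fin m)) : X → X :=
  w.foldl (fun g i => h i ∘ g) id

lemma wordComp_foldl {X : Type*} {m : ℕ} (h : Fin m → X → X) (w : List (Fin m))
    (g : X → X) : w.foldl (fun g i => h i ∘ g) g = (wordComp h w) ∘ g := by
  induction w generalizing g with
  | nil => rfl
  | cons a w ih =>
    show List.foldl _ (h a ∘ g) w = _
    rw [ih]
    show _ = (List.foldl _ (h a ∘ id) w) ∘ g
    rw [ih]
    rfl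

lemma wordComp_cons {X : Type*} {m : ℕ} (h : Fin m → X → X) (a : Fin m)
    (w : List (Fin m)) : wordComp h (a :: w) = (wordComp h w) ∘ (h a) := by
  show List.foldl _ (h a ∘ id) w = _
  rw [wordComp_foldl]
  rfl

lemma mem_of_wordComp_mem {X : Type*} {m : ℕ} (h : Fin m → X → X) (L : Set X)
    (hbss : L = ⋃ j, h j ⁻¹' L) (w : List (Fin m)) (y : X)
    (hy : wordComp h w y ∈ L) : y ∈ L := by
  induction w generalizing y with
  | nil => exact hy
  | cons a w ih =>
    rw [wordComp_cons] at hy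
    have : h a y ∈ L := ih _ hy
    rw [hbss]
    exact Set.mem_iUnion.2 ⟨a, this⟩

/-- Let `X` be a compact metric space, `m ≥ 2`, and `h₁, …, h_m : X → X` continuous.
Let `L` be nonempty compact with `L = ⋃_j h_j⁻¹(L)`, and suppose `h₁⁻¹(L)` is
disjoint from `h_j⁻¹(L)` for every `j ≠ 1`.  Then for every nonempty word
`w = (w₁, …, w_k)` different from `(1, …, 1)`, one has
`(h₁^k)⁻¹(L) ∩ (h_{w_k} ∘ ⋯ ∘ h_{w₁})⁻¹(L) = ∅`. -/
theorem stmt_4 {X : Type*} [MetricSpace X] [CompactSpace X]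
    {m : ℕ} (hm : 2 ≤ m) (h : Fin m → X → X) (hcont : ∀ j, Continuous (h j))
    (L : Set X) (hLne : L.Nonempty) (hLc : IsCompact L)
    (hbss : L = ⋃ j, h j ⁻¹' L)
    (hsep : ∀ j : Fin m, j ≠ ⟨0, by omega⟩ → h ⟨0, by omega⟩ ⁻¹' L ∩ h j ⁻¹' L = ∅) :
    ∀ w : List (Fin m), w ≠ [] → w ≠ List.replicate w.length ⟨0, by omega⟩ →
      ((h ⟨0, by omega⟩)^[w.length] ⁻¹' L) ∩ ((wordComp h w) ⁻¹' L) = ∅ := by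
  set e : Fin m := ⟨0, by omega⟩ with he
  intro w
  induction w with
  | nil => intro hne _; exact absurd rfl hne
  | cons a w ih =>
    intro _ hrepl
    rw [Set.eq_empty_iff_forall_notMem]
    rintro x ⟨hx1, hx2⟩
    rw [Set.mem_preimage, wordComp_cons] at hx2
    rw [Set.mem_preimage, List.length_cons, Function.iterate_succ, Function.comp_apply] at hx1
    by_cases ha : a = e
    · subst ha
      have hw : w ≠ [] := by
        rintro rfl
        exact hrepl (by simp)
      have hwr : w ≠ List.replicate w.length e := by
        intro hw'
        apply hrepl
        rw [List.length_cons, List.replicate_succ, ← hw']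
      have := ih hw hwr
      rw [Set.eq_empty_iff_forall_notMem] at this
      exact this (h e x) ⟨hx1, hx2⟩
    · have haL : h a x ∈ L := mem_of_wordComp_mem h L hbss w (h a x) hx2
      have heL : h e x ∈ L := mem_of_wordComp_mem h L hbss (List.replicate w.length e) _ (by
        have : wordComp h (List.replicate w.length e) = (h e)^[w.length] := by
          clear hx1 hx2
          induction w.length with
          | zero => rfl
          | succ n ihn =>
            rw [List.replicate_succ, wordComp_cons, ihn, ← Function.iterate_succ]
        rw [this]; exact hx1)
      have := hsep a ha
      rw [Set.eq_empty_iff_forall_notMem] at this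
      exact this x ⟨heL, haL⟩
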